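/- arXiv:2104.12268 — 2 statements merged into one kernel-verified Lean document; each statement's English description precedes it below -/
import Mathlib

section
/- Let G be a finite simple graph and m ≥ 1 an integer such that P_DP(G,m) = P(G,m). Then P_DP(K_1 ∨ G, m+1) = P(K_1 ∨ G, m+1). -/
open SimpleGraph Finset

/-- A (standardized) `m`-fold cover of a graph `G`: the vertex set of the cover graph `H`
is `V × Fin m`, where the fiber (list) of a vertex `v` is `L v = {v} × Fin m`.
Every `m`-fold cover in the sense of Dvořák–Postle is isomorphic to one of this form. -/
structure DPCover {V : Type} (G : SimpleGraph V) (m : ℕ) where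
  /-- the cover graph -/
  H : SimpleGraph (V × Fin m)
  /-- each fiber induces a complete graph -/
  fiber_complete : ∀ (v : V) (i j : Fin m), i ≠ j → H.Adj (v, i) (v, j)
  /-- cross-edges only join fibers of adjacent vertices -/
  cross : ∀ (u v : V) (i j : Fin m), H.Adj (u, i) (v, j) → u = v ∨ G.Adj u v
  /-- the cross-edges between the fibers of two adjacent vertices form a matching -/
  matching : ∀ (u v : V), G.Adj u v → ∀ (i j j' : Fin m),
      H.Adj (u, i) (v, j) → H.Adj (u, i) (v, j') → j = j'

/-- `f` encodes an `(L,H)`-coloring of `G`, i.e. the set `{(v, f v) : v ∈ V}` is independent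
in the cover graph. -/
def DPCover.IsColoring {V : Type} {G : SimpleGraph V} {m : ℕ} (C : DPCover G m)
    (f : V → Fin m) : Prop :=
  ∀ u v : V, ¬ C.H.Adj (u, f u) (v, f v)

/-- `P_DP(G, (L,H))`: the number of `(L,H)`-colorings of `G`. -/
noncomputable def DPCover.count {V : Type} [Fintype V] {G : SimpleGraph V} {m : ℕ}
    (C : DPCover G m) : ℕ :=
  Nat.card { f : V → Fin m // C.IsColoring f }

/-- `N((v,j), (L,H))`: the number of `(L,H)`-colorings of `G` containing the vertex `(v, j)`. -/
noncomputable def DPCover.countAt {V : Type} [Fintype V] {G : SimpleGraph V} {m : ℕ}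
    (C : DPCover G m) (v : V) (j : Fin m) : ℕ :=
  Nat.card { f : V → Fin m // C.IsColoring f ∧ f v = j }

/-- The DP color function `P_DP(G, m)`. -/
noncomputable def PDP {V : Type} [Fintype V] (G : SimpleGraph V) (m : ℕ) : ℕ :=
  sInf { n : ℕ | ∃ C : DPCover G m, n = C.count }

/-- The chromatic polynomial `P(G, m)`: the number of proper colorings with colors in `Fin m`. -/
noncomputable def chromPoly {V : Type} [Fintype V] (G : SimpleGraph V) (m : ℕ) : ℕ :=
  Nat.card { f : V → Fin m // ∀ u v : V, G.Adj u v → f u ≠ f v }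

/-- The DP color function threshold `τ_DP(G)`: the least `N ≥ χ(G)` such that
`P_DP(G,m) = P(G,m)` for all `m ≥ N` (and `∞` if there is no such `N`). -/
noncomputable def tauDP {V : Type} [Fintype V] (G : SimpleGraph V) : ℕ∞ :=
  sInf { N : ℕ∞ | ∃ n : ℕ, N = (n : ℕ∞) ∧ G.chromaticNumber ≤ (n : ℕ∞) ∧
      ∀ m : ℕ, n ≤ m → PDP G m = chromPoly G m }

/-- The join `G ∨ K` of two vertex-disjoint graphs. -/
def joinG {α β : Type} (G : SimpleGraph α) (K : SimpleGraph β) : SimpleGraph (α ⊕ β) where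
  Adj x y := match x, y with
    | Sum.inl a, Sum.inl a' => G.Adj a a'
    | Sum.inr b, Sum.inr b' => K.Adj b b'
    | Sum.inl _, Sum.inr _ => True
    | Sum.inr _, Sum.inl _ => True
  symm := by
    constructor
    rintro (a | b) (a' | b') h
    · exact h.symm
    · trivial
    · trivial
    · exact h.symm
  loopless := by
    constructor
    rintro (a | b) h
    · exact G.loopless.irrefl a h
    · exact K.loopless.irrefl b h

/-- The vertex-gluing of graphs `G i` at the vertices `u i`: identify all the `u i` into a
single vertex (represented by `none`). -/
def VGlue {n : ℕ} {V : Fin n → Type} (G : ∀ i, SimpleGraph (V i)) (u : ∀ i, V i) :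
    SimpleGraph (Option (Σ i : Fin n, {x : V i // x ≠ u i})) where
  Adj a b := match a, b with
    | none, none => False
    | none, some ⟨i, x⟩ => (G i).Adj (u i) x.val
    | some ⟨i, x⟩, none => (G i).Adj x.val (u i)
    | some ⟨i, x⟩, some ⟨j, y⟩ => ∃ h : i = j, (G j).Adj (cast (congrArg V h) x.val) y.val
  symm := by
    constructor
    rintro (_ | ⟨i, x⟩) (_ | ⟨j, y⟩) h
    · exact h.elim
    · exact h.symm
    · exact h.symm
    · obtain ⟨rfl, h⟩ := h
      exact ⟨rfl, h.symm⟩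
  loopless := by
    constructor
    rintro (_ | ⟨i, x⟩) h
    · exact h
    · obtain ⟨h', h⟩ := h
      exact (G i).loopless.irrefl x.val h

/-- The `K_p`-gluing of graphs `G i`, each with a chosen `p`-clique `U i 0, …, U i (p-1)`:
the cliques are identified coordinatewise (the glued clique is `Sum.inl (Fin p)`). -/
def KGlue {n p : ℕ} {V : Fin n → Type} (G : ∀ i, SimpleGraph (V i))
    (U : ∀ i, Fin p → V i) :
    SimpleGraph ((Fin p) ⊕ (Σ i : Fin n, {x : V i // ∀ q, x ≠ U i q})) where
  Adj a b := match a, b with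
    | Sum.inl q, Sum.inl q' => q ≠ q'
    | Sum.inl q, Sum.inr ⟨i, x⟩ => (G i).Adj (U i q) x.val
    | Sum.inr ⟨i, x⟩, Sum.inl q => (G i).Adj x.val (U i q)
    | Sum.inr ⟨i, x⟩, Sum.inr ⟨j, y⟩ => ∃ h : i = j, (G j).Adj (cast (congrArg V h) x.val) y.val
  symm := by
    constructor
    rintro (q | ⟨i, x⟩) (q' | ⟨j, y⟩) h
    · exact h.symm
    · exact h.symm
    · exact h.symm
    · obtain ⟨rfl, h⟩ := h
      exact ⟨rfl, h.symm⟩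
  loopless := by
    constructor
    rintro (q | ⟨i, x⟩) h
    · exact h rfl
    · obtain ⟨h', h⟩ := h
      exact (G i).loopless.irrefl x.val h

/-- The disjoint union of a family of graphs. -/
def sigmaG {n : ℕ} {V : Fin n → Type} (G : ∀ i, SimpleGraph (V i)) :
    SimpleGraph (Σ i : Fin n, V i) where
  Adj a b := ∃ h : a.1 = b.1, (G b.1).Adj (cast (congrArg V h) a.2) b.2
  symm := by
    constructor
    rintro ⟨i, x⟩ ⟨j, y⟩ ⟨h1, h2⟩
    dsimp only at h1 h2 ⊢
    subst h1
    exact ⟨rfl, h2.symm⟩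
  loopless := by
    constructor
    rintro ⟨i, x⟩ ⟨h1, h2⟩
    dsimp only at h2
    exact (G i).loopless.irrefl x h2

/-- chordal: every cycle of length at least `4` has a chord, i.e. an edge of the graph
joining two vertices of the cycle that is not an edge of the cycle. -/
def IsChordal {V : Type} (G : SimpleGraph V) : Prop :=
  ∀ (v : V) (w : G.Walk v v), w.IsCycle → 4 ≤ w.length →
    ∃ x y, x ∈ w.support ∧ y ∈ w.support ∧ G.Adj x y ∧ s(x, y) ∉ w.edges

/-!
A proper `(m+1)`-coloring of `K₁ ∨ G` is a choice of the apex color followed by a proper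
`m`-coloring of `G` in the remaining colors, so `P(K₁ ∨ G, m+1) ≤ (m+1) P(G, m)`.
Conversely, in an `(m+1)`-fold cover of `K₁ ∨ G`, fix a vertex `(apex, j)` of the apex
fiber; deleting its (at most one) neighbor in every other fiber leaves an `m`-fold cover of
`G`, each of whose colorings extends by `(apex, j)`. Summing over `j` gives
`(m+1) P_DP(G, m) ≤ P_DP(K₁ ∨ G, m+1)`, and `P_DP ≤ P` always holds via the trivial cover.
-/

namespace DPCover

variable {V : Type} {G : SimpleGraph V} {m : ℕ}

def trivial (G : SimpleGraph V) (m : ℕ) : DPCover G m where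
  H := G □ ⊤
  fiber_complete _ _ _ hij := boxProd_adj.2 (Or.inr ⟨hij, rfl⟩)
  cross _ _ _ _ h := (boxProd_adj.1 h).elim (fun h => Or.inr h.1) (fun h => Or.inl h.2)
  matching u v huv i j j' h h' := by
    rcases boxProd_adj.1 h with ⟨-, rfl⟩ | ⟨-, rfl⟩
    · rcases boxProd_adj.1 h' with ⟨-, rfl⟩ | ⟨-, rfl⟩
      · rfl
      · exact absurd huv (G.loopless.irrefl u)
    · exact absurd huv (G.loopless.irrefl u)

theorem isColoring_trivial_iff (f : V → Fin m) :
    (trivial G m).IsColoring f ↔ ∀ u v, G.Adj u v → f u ≠ f v := by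
  simp only [IsColoring, trivial, boxProd_adj, top_adj]
  constructor
  · exact fun hf u v huv hfuv => hf u v (Or.inl ⟨huv, hfuv⟩)
  · rintro hf u v (⟨huv, hfuv⟩ | ⟨hfuv, rfl⟩)
    · exact hf u v huv hfuv
    · exact hfuv rfl

theorem count_trivial [Fintype V] (G : SimpleGraph V) (m : ℕ) :
    (trivial G m).count = chromPoly G m :=
  Nat.card_congr (Equiv.subtypeEquivRight isColoring_trivial_iff)

theorem count_eq_sum_countAt [Fintype V] (C : DPCover G m) (v : V) :
    C.count = ∑ j, C.countAt v j := by
  simp only [count, countAt]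
  rw [← Nat.card_sigma]
  exact Nat.card_congr
    ⟨fun f => ⟨f.1 v, f.1, f.2, rfl⟩, fun x => ⟨x.2.1, x.2.2.1⟩,
      fun _ => rfl, by rintro ⟨j, g, hg, rfl⟩; rfl⟩

end DPCover

section PDP

variable {V : Type} [Fintype V] {G : SimpleGraph V} {m : ℕ}

theorem PDP_le_count (C : DPCover G m) : PDP G m ≤ C.count :=
  Nat.sInf_le ⟨C, rfl⟩

theorem exists_count_eq_PDP (G : SimpleGraph V) (m : ℕ) : ∃ C : DPCover G m, C.count = PDP G m :=
  (Nat.sInf_mem (⟨_, DPCover.trivial G m, rfl⟩ : {n | ∃ C : DPCover G m, n = C.count}.Nonempty)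
    ).imp fun _ h => h.symm

theorem PDP_le_chromPoly (G : SimpleGraph V) (m : ℕ) : PDP G m ≤ chromPoly G m :=
  DPCover.count_trivial G m ▸ PDP_le_count _

theorem le_PDP_of_forall_le_count {n : ℕ} (h : ∀ C : DPCover G m, n ≤ C.count) : n ≤ PDP G m :=
  let ⟨C, hC⟩ := exists_count_eq_PDP G m
  hC ▸ h C

end PDP

section Join

variable {α : Type} {G : SimpleGraph α} {m : ℕ}

local notation "K₁∨" G => joinG (⊤ : SimpleGraph (Fin 1)) G

theorem chromPoly_join_le_succ_mul [Fintype α] (G : SimpleGraph α) (m : ℕ) :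
    chromPoly (K₁∨ G) (m + 1) ≤ (m + 1) * chromPoly G m := by
  let Col := {f : Fin 1 ⊕ α → Fin (m + 1) // ∀ u v, (K₁∨ G).Adj u v → f u ≠ f v}
  let restrict (f : Col) (v : α) : Fin m :=
    (finSuccAboveEquiv (f.1 (.inl 0))).symm ⟨f.1 (.inr v), f.2 _ _ True.intro⟩
  have succAbove_restrict (f : Col) (v : α) :
      (f.1 (.inl 0)).succAbove (restrict f v) = f.1 (.inr v) :=
    congrArg Subtype.val ((finSuccAboveEquiv _).apply_symm_apply _)
  let F (f : Col) : Fin (m + 1) × {g : α → Fin m // ∀ u v, G.Adj u v → g u ≠ g v} :=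
    ⟨f.1 (.inl 0), restrict f, fun u v huv hfuv =>
      f.2 (.inr u) (.inr v) huv (by rw [← succAbove_restrict, hfuv, succAbove_restrict])⟩
  have hF : Function.Injective F := by
    intro f f' hff
    have happ : f.1 (.inl 0) = f'.1 (.inl 0) := congrArg Prod.fst hff
    apply Subtype.ext
    funext x
    rcases x with a | v
    · exact Subsingleton.elim a 0 ▸ happ
    · rw [← succAbove_restrict, ← succAbove_restrict]
      exact congrArg₂ (fun c (g : α → Fin m) => c.succAbove (g v)) happ
        (congrArg (fun p => p.2.1) hff)
  refine (Nat.card_le_card_of_injective F hF).trans_eq ?_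
  rw [Nat.card_prod, Nat.card_eq_fintype_card, Fintype.card_fin]
  rfl

namespace DPCover

variable (C : DPCover (K₁∨ G) (m + 1)) (j : Fin (m + 1))

/-- The color of `v` whose cover vertex is adjacent to `(apex, j)`, if there is one. -/
noncomputable def apexNbr (v : α) : Fin (m + 1) :=
  open Classical in
  if hv : ∃ i, C.H.Adj (.inl 0, j) (.inr v, i) then hv.choose else j

theorem not_adj_succAbove_apexNbr (v : α) (i : Fin m) :
    ¬ C.H.Adj (.inl 0, j) (.inr v, (C.apexNbr j v).succAbove i) := by
  intro hadj
  have hv : ∃ i, C.H.Adj (.inl 0, j) (.inr v, i) := ⟨_, hadj⟩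
  have hnbr : C.apexNbr j v = hv.choose := dif_pos hv
  exact Fin.succAbove_ne (C.apexNbr j v) i
    ((C.matching (.inl 0) (.inr v) True.intro _ _ _ hadj hv.choose_spec).trans hnbr.symm)

/-- The `m`-fold cover of `G` left after deleting the apex fiber and the neighbors of
`(apex, j)`; color `i` of `v` stands for color `(apexNbr j v).succAbove i` of `C`. -/
noncomputable def deleteApex : DPCover G m where
  H := C.H.comap fun p => ((Sum.inr p.1 : Fin 1 ⊕ α), (C.apexNbr j p.1).succAbove p.2)
  fiber_complete v _ _ hii := C.fiber_complete (.inr v) _ _ (Fin.succAbove_right_injective.ne hii)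
  cross _ _ _ _ hadj := (C.cross _ _ _ _ hadj).imp_left fun h => Sum.inr_injective h
  matching u v huv _ _ _ h h' :=
    Fin.succAbove_right_injective (C.matching (.inr u) (.inr v) huv _ _ _ h h')

theorem count_deleteApex_le_countAt [Fintype α] : (C.deleteApex j).count ≤ C.countAt (.inl 0) j := by
  let extend (f : {f : α → Fin m // (C.deleteApex j).IsColoring f}) :
      {g : Fin 1 ⊕ α → Fin (m + 1) // C.IsColoring g ∧ g (.inl 0) = j} :=
    ⟨Sum.elim (fun _ => j) fun v => (C.apexNbr j v).succAbove (f.1 v), by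
      refine ⟨?_, rfl⟩
      rintro (a | u) (a' | v)
      · exact Subsingleton.elim a a' ▸ C.H.loopless.irrefl _
      · exact Subsingleton.elim a 0 ▸ C.not_adj_succAbove_apexNbr j v _
      · exact Subsingleton.elim a' 0 ▸ fun h => C.not_adj_succAbove_apexNbr j u _ h.symm
      · exact f.2 u v⟩
  refine Nat.card_le_card_of_injective extend fun f f' hff => Subtype.ext (funext fun v => ?_)
  exact Fin.succAbove_right_injective (congrFun (congrArg Subtype.val hff) (.inr v))

theorem succ_mul_PDP_le_count [Fintype α] : (m + 1) * PDP G m ≤ C.count := by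
  calc (m + 1) * PDP G m = ∑ _j : Fin (m + 1), PDP G m := by simp
    _ ≤ ∑ j, C.countAt (.inl 0) j := Finset.sum_le_sum fun j _ =>
        (PDP_le_count (C.deleteApex j)).trans (C.count_deleteApex_le_countAt j)
    _ = C.count := (C.count_eq_sum_countAt _).symm

end DPCover

theorem succ_mul_PDP_le_PDP_join [Fintype α] (G : SimpleGraph α) (m : ℕ) :
    (m + 1) * PDP G m ≤ PDP (K₁∨ G) (m + 1) :=
  le_PDP_of_forall_le_count fun C => C.succ_mul_PDP_le_count

end Join

theorem stmt_7_general {α : Type} [Fintype α] (G : SimpleGraph α) (m : ℕ)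
    (h : PDP G m = chromPoly G m) :
    PDP (joinG (⊤ : SimpleGraph (Fin 1)) G) (m + 1)
      = chromPoly (joinG (⊤ : SimpleGraph (Fin 1)) G) (m + 1) := by
  refine le_antisymm (PDP_le_chromPoly _ _) ?_
  calc chromPoly (joinG (⊤ : SimpleGraph (Fin 1)) G) (m + 1)
      ≤ (m + 1) * chromPoly G m := chromPoly_join_le_succ_mul G m
    _ = (m + 1) * PDP G m := by rw [h]
    _ ≤ PDP (joinG (⊤ : SimpleGraph (Fin 1)) G) (m + 1) := succ_mul_PDP_le_PDP_join G m

theorem stmt_7 {α : Type} [Fintype α] (G : SimpleGraph α) (m : ℕ) (hm : 1 ≤ m)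
    (h : PDP G m = chromPoly G m) :
    PDP (joinG (⊤ : SimpleGraph (Fin 1)) G) (m + 1)
      = chromPoly (joinG (⊤ : SimpleGraph (Fin 1)) G) (m + 1) :=
  stmt_7_general G m h
end

section
/- Let k ≥ 1, let G = C_{2k+2}, and let (L,H) be a 2-fold cover of G that admits no (L,H)-coloring. Then the spanning subgraph of H whose edge set consists exactly of the cross-edges of H (the edges of H joining L(u) to L(v) for distinct vertices u, v of G) is a cycle on 4k+4 vertices. -/
open SimpleGraph Finset

/-- The spanning subgraph of the cover graph consisting exactly of the cross-edges. -/
def crossGraph {V : Type} {G : SimpleGraph V} {m : ℕ} (C : DPCover G m) :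
    SimpleGraph (V × Fin m) where
  Adj a b := C.H.Adj a b ∧ a.1 ≠ b.1
  symm := ⟨fun _ _ h => ⟨h.1.symm, h.2.symm⟩⟩
  loopless := ⟨fun _ h => h.2 rfl⟩


/-!
If some vertex of `L(v + 1)` had no neighbour in `L(v)`, a greedy coloring along the path
`v + 1, v + 2, …, v` would close up. So every matching between consecutive fibres is perfect, and
the cross-edges form the graph of the permutation `(v, i) ↦ (v + 1, σ_v i)` of `V(H)`. Going once
around the cycle either brings each lift back to its start or swaps the two lifts. In the first
case, choosing in the fibres alternately the vertex on and the vertex off a closed lift is a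
coloring, because the cycle has even length. Hence the lifts are swapped, the permutation is a
single cycle of length `2n`, and its graph is `C_{2n}`.
-/

open Fin.NatCast

theorem SimpleGraph.cycleGraph_adj_iff_eq_add_one {n : ℕ} [NeZero n] (hn : 2 ≤ n) {u v : Fin n} :
    (cycleGraph n).Adj u v ↔ v = u + 1 ∨ u = v + 1 := by
  obtain ⟨m, rfl⟩ : ∃ m, n = m + 2 := ⟨n - 2, by omega⟩
  rw [cycleGraph_adj, sub_eq_iff_eq_add', sub_eq_iff_eq_add', or_comm]

theorem SimpleGraph.cycleGraph_adj_add_one {n : ℕ} [NeZero n] (hn : 2 ≤ n) (v : Fin n) :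
    (cycleGraph n).Adj v (v + 1) :=
  (cycleGraph_adj_iff_eq_add_one hn).mpr (.inl rfl)

theorem Fin.val_add_one_of_add_one_ne_zero {n : ℕ} [NeZero n] {i : Fin n} (h : i + 1 ≠ 0) :
    (i + 1).val = i.val + 1 := by
  rw [Fin.ne_iff_vne, Fin.val_add, Fin.val_one', Nat.add_mod_mod, Fin.val_zero] at h
  rw [Fin.val_add, Fin.val_one', Nat.add_mod_mod, Nat.mod_eq_of_lt]
  by_contra hle
  exact h (by rw [show i.val + 1 = n by omega, Nat.mod_self])

theorem Fin.natCast_val_add_one_of_even {n : ℕ} [NeZero n] (hn : Even n) (x : Fin n) :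
    (((x + 1 : Fin n) : ℕ) : Fin 2) = (x.val : Fin 2) + 1 := by
  apply Fin.ext
  simp [Fin.val_add, Nat.mod_mod_of_dvd _ (even_iff_two_dvd.mp hn)]

theorem Fin.exists_eq_and_apply_add_one_eq {n : ℕ} [NeZero n] {α : Type*} (φ : Fin n → α → α)
    (v : Fin n) (a : α) : ∃ g : Fin n → α, g v = a ∧ ∀ x, x + 1 ≠ v → g (x + 1) = φ x (g x) := by
  let s : ℕ → α := fun t => Nat.rec a (fun t b => φ (v + t) b) t
  refine ⟨fun x => s (x - v).val, by simp [s], fun x hx => ?_⟩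
  have hsucc : (x + 1 - v).val = (x - v).val + 1 := by
    rw [add_sub_right_comm, Fin.val_add_one_of_add_one_ne_zero]
    rwa [← add_sub_right_comm, sub_ne_zero]
  simp only [hsucc, s, Fin.cast_val_eq_self, add_sub_cancel]

theorem Function.IsPeriodicPt.iterate_val_add_one {α : Type*} {f : α → α} {n : ℕ} [NeZero n]
    {a : α} (h : IsPeriodicPt f n a) (x : Fin n) : f^[(x + 1).val] a = f (f^[x.val] a) := by
  rw [Fin.val_add, Fin.val_one', Nat.add_mod_mod, h.iterate_mod_apply, iterate_succ_apply']

theorem SimpleGraph.nonempty_iso_cycleGraph_of_minimalPeriod {α : Type*} [Fintype α]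
    (G : SimpleGraph α) (f : α → α) (a : α) (hG : ∀ x y, G.Adj x y ↔ y = f x ∨ x = f y)
    (ha : Function.minimalPeriod f a = Fintype.card α) :
    Nonempty (G ≃g cycleGraph (Fintype.card α)) := by
  set m := Fintype.card α
  have hm : 2 ≤ m := by
    have hfa : ¬ Function.IsFixedPt f a := fun h => G.loopless.irrefl a ((hG a a).2 (.inl h.symm))
    have : m ≠ 1 := ha ▸ mt Function.minimalPeriod_eq_one_iff_isFixedPt.mp hfa
    have : 0 < m := Fintype.card_pos_iff.mpr ⟨a⟩
    omega
  have : NeZero m := ⟨by omega⟩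
  let e : Fin m → α := fun t => f^[t.val] a
  have he_succ : ∀ t, e (t + 1) = f (e t) :=
    (ha ▸ Function.isPeriodicPt_minimalPeriod f a).iterate_val_add_one
  have he_inj : e.Injective := fun s t hst => Fin.ext <|
    Function.iterate_injOn_Iio_minimalPeriod (ha.symm ▸ s.isLt) (ha.symm ▸ t.isLt) hst
  have he : e.Bijective := (Fintype.bijective_iff_injective_and_card e).mpr ⟨he_inj, by simp [m]⟩
  refine ⟨(⟨Equiv.ofBijective e he, fun {s t} => ?_⟩ : cycleGraph m ≃g G).symm⟩
  simp only [Equiv.ofBijective_apply, hG, ← he_succ, he_inj.eq_iff,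
    cycleGraph_adj_iff_eq_add_one hm]

namespace DPCover

theorem not_adj_add_of_adj {V : Type} {G : SimpleGraph V} (C : DPCover G 2) {u v : V}
    (huv : G.Adj u v) {a b : Fin 2} (hab : C.H.Adj (u, a) (v, b)) (c : Fin 2) :
    ¬ C.H.Adj (u, a + c) (v, b + c + 1) := by
  intro h
  fin_cases c
  · exact one_ne_zero (add_eq_left.mp (C.matching u v huv a _ _ (by simpa using h) hab))
  · exact one_ne_zero <| add_eq_left.mp <|
      C.matching v u huv.symm b _ _ (by simpa [add_assoc] using h.symm) hab.symm

variable {n : ℕ} [NeZero n] (C : DPCover (cycleGraph n) 2)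

open Classical in
/-- The neighbour of `p` in the next fibre, whenever `p` has one. -/
noncomputable def liftSucc (p : Fin n × Fin 2) : Fin n × Fin 2 :=
  (p.1 + 1, if C.H.Adj p (p.1 + 1, 0) then 0 else 1)

theorem iterate_liftSucc_fst (t : ℕ) (p : Fin n × Fin 2) : (C.liftSucc^[t] p).1 = p.1 + t := by
  induction t with
  | zero => simp
  | succ t ih => rw [Function.iterate_succ_apply', liftSucc, ih, Nat.cast_succ, add_assoc]

variable (hn : 2 ≤ n)
include hn

theorem isColoring_of_forall_not_adj_succ {f : Fin n → Fin 2}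
    (hf : ∀ v, ¬ C.H.Adj (v, f v) (v + 1, f (v + 1))) : C.IsColoring f := by
  intro u w hadj
  rcases C.cross _ _ _ _ hadj with rfl | huw
  · exact C.H.loopless.irrefl _ hadj
  · rcases (cycleGraph_adj_iff_eq_add_one hn).mp huw with rfl | rfl
    · exact hf u hadj
    · exact hf w hadj.symm

theorem exists_not_adj_succ (v : Fin n) (i : Fin 2) : ∃ j, ¬ C.H.Adj (v, i) (v + 1, j) := by
  by_contra! h
  exact absurd (C.matching v (v + 1) (cycleGraph_adj_add_one hn v) i 0 1 (h 0) (h 1)) (by decide)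

variable (hC : ∀ f, ¬ C.IsColoring f)
include hC

theorem exists_adj_pred (v : Fin n) (j : Fin 2) : ∃ i, C.H.Adj (v, i) (v + 1, j) := by
  by_contra! hv
  choose avoid havoid using C.exists_not_adj_succ hn
  obtain ⟨f, hfv, hf⟩ := Fin.exists_eq_and_apply_add_one_eq avoid (v + 1) j
  refine hC f (C.isColoring_of_forall_not_adj_succ hn fun x => ?_)
  by_cases hx : x + 1 = v + 1
  · obtain rfl := add_right_cancel hx
    rw [hfv]
    exact hv _
  · rw [hf x hx]
    exact havoid x (f x)

theorem exists_adj_succ (v : Fin n) (i : Fin 2) : ∃ j, C.H.Adj (v, i) (v + 1, j) := by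
  choose pred hpred using C.exists_adj_pred hn hC v
  have hinj : pred.Injective := fun j j' h =>
    C.matching v (v + 1) (cycleGraph_adj_add_one hn v) (pred j) j j' (hpred j) (h ▸ hpred j')
  obtain ⟨j, rfl⟩ := Finite.injective_iff_surjective.mp hinj i
  exact ⟨j, hpred j⟩

theorem adj_liftSucc (p : Fin n × Fin 2) : C.H.Adj p (C.liftSucc p) := by
  obtain ⟨j, hj⟩ := C.exists_adj_succ hn hC p.1 p.2
  unfold liftSucc
  split_ifs with h0
  · exact h0
  · fin_cases j
    · exact absurd hj h0
    · exact hj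

theorem eq_liftSucc_of_adj {p : Fin n × Fin 2} {j : Fin 2} (h : C.H.Adj p (p.1 + 1, j)) :
    (p.1 + 1, j) = C.liftSucc p :=
  Prod.ext rfl <| C.matching _ _ (cycleGraph_adj_add_one hn p.1) p.2 _ _ h (C.adj_liftSucc hn hC p)

theorem crossGraph_adj_iff (p q : Fin n × Fin 2) :
    (crossGraph C).Adj p q ↔ q = C.liftSucc p ∨ p = C.liftSucc q := by
  constructor
  · rintro ⟨hH, hne⟩
    obtain ⟨u, i⟩ := p
    obtain ⟨w, j⟩ := q
    rcases C.cross _ _ _ _ hH with huw | huw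
    · exact absurd huw hne
    rcases (cycleGraph_adj_iff_eq_add_one hn).mp huw with rfl | rfl
    · exact .inl (C.eq_liftSucc_of_adj hn hC hH)
    · exact .inr (C.eq_liftSucc_of_adj hn hC hH.symm)
  · rintro (rfl | rfl)
    · exact ⟨C.adj_liftSucc hn hC p, (cycleGraph_adj_add_one hn p.1).ne⟩
    · exact ⟨(C.adj_liftSucc hn hC q).symm, (cycleGraph_adj_add_one hn q.1).ne'⟩

variable (heven : Even n)
include heven

theorem not_isPeriodicPt_liftSucc (a : Fin 2) : ¬ Function.IsPeriodicPt C.liftSucc n (0, a) := by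
  intro h
  set g : Fin n → Fin 2 := fun x => (C.liftSucc^[x.val] (0, a)).2
  refine hC (fun x => g x + x.val) (C.isColoring_of_forall_not_adj_succ hn fun x => ?_)
  have hg : ∀ x : Fin n, C.liftSucc^[x.val] (0, a) = (x, g x) := fun x =>
    Prod.ext (by simp [iterate_liftSucc_fst]) rfl
  have hadj : C.H.Adj (x, g x) (x + 1, g (x + 1)) := by
    rw [← hg, ← hg, h.iterate_val_add_one]
    exact C.adj_liftSucc hn hC _
  rw [Fin.natCast_val_add_one_of_even heven, ← add_assoc]
  exact C.not_adj_add_of_adj (cycleGraph_adj_add_one hn x) hadj _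

theorem iterate_liftSucc_self (a : Fin 2) : C.liftSucc^[n] (0, a) = (0, a + 1) := by
  have h1 : (C.liftSucc^[n] (0, a)).1 = 0 := by simp [iterate_liftSucc_fst]
  have h2 : (C.liftSucc^[n] (0, a)).2 ≠ a := fun h2 =>
    C.not_isPeriodicPt_liftSucc hn hC heven a (Prod.ext h1 h2)
  exact Prod.ext h1 (by show _ = a + 1; omega)

theorem minimalPeriod_liftSucc : Function.minimalPeriod C.liftSucc (0, 0) = 2 * n := by
  have hper : Function.IsPeriodicPt C.liftSucc (2 * n) (0, 0) := by
    rw [Function.IsPeriodicPt, Function.IsFixedPt, two_mul, Function.iterate_add_apply,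
      C.iterate_liftSucc_self hn hC heven, C.iterate_liftSucc_self hn hC heven]
    rfl
  set p := Function.minimalPeriod C.liftSucc (0, 0)
  have hp : C.liftSucc^[p] (0, 0) = (0, 0) := Function.iterate_minimalPeriod
  obtain ⟨c, hc⟩ : n ∣ p := by
    have := congrArg Prod.fst hp
    rw [iterate_liftSucc_fst, zero_add] at this
    exact Fin.natCast_eq_zero.mp this
  have hc2 : c ∣ 2 := by
    have hdvd : p ∣ 2 * n := hper.minimalPeriod_dvd
    rwa [hc, mul_comm 2, Nat.mul_dvd_mul_iff_left (by omega)] at hdvd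
  have hc1 : c ≠ 1 := by
    rintro rfl
    rw [mul_one] at hc
    rw [hc, C.iterate_liftSucc_self hn hC heven] at hp
    exact absurd hp (by simp)
  have := Nat.le_of_dvd two_pos hc2
  interval_cases c <;> simp_all [mul_comm]

omit hn

theorem nonempty_crossGraph_iso_cycleGraph : Nonempty (crossGraph C ≃g cycleGraph (2 * n)) := by
  have hn : 2 ≤ n := by
    obtain ⟨m, rfl⟩ := heven
    have := NeZero.ne (m + m)
    omega
  have hcard : Fintype.card (Fin n × Fin 2) = 2 * n := by simp [mul_comm]
  rw [← hcard]
  exact nonempty_iso_cycleGraph_of_minimalPeriod _ C.liftSucc (0, 0) (C.crossGraph_adj_iff hn hC)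
    (by rw [C.minimalPeriod_liftSucc hn hC heven, hcard])

end DPCover

theorem stmt_12_general (k : ℕ) (C : DPCover (cycleGraph (2 * k + 2)) 2)
    (h : ∀ f : Fin (2 * k + 2) → Fin 2, ¬ C.IsColoring f) :
    Nonempty (crossGraph C ≃g cycleGraph (4 * k + 4)) := by
  rw [show 4 * k + 4 = 2 * (2 * k + 2) by ring]
  exact C.nonempty_crossGraph_iso_cycleGraph h ⟨k + 1, by ring⟩

theorem stmt_12 (k : ℕ) (hk : 1 ≤ k) (C : DPCover (cycleGraph (2 * k + 2)) 2)
    (h : ∀ f : Fin (2 * k + 2) → Fin 2, ¬ C.IsColoring f) :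
    Nonempty (crossGraph C ≃g cycleGraph (4 * k + 4)) :=
  stmt_12_general k C h
end
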